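/- There is no continuity bound of the form D̂(ρ‖σ) ≤ f(ε,d) with f(ε,d) → 0 as ε → 0 for each fixed d, valid for all states ρ, σ with (1/2)‖ρ−σ‖₁ ≤ ε and ρ ≤ 2^d σ. Concretely, for qubit states ρ = |0⟩⟨0| and σ_ε = (9/10)|ψ_ε⟩⟨ψ_ε| + (1/10)|0⟩⟨0| with |ψ_ε⟩ = √(1−ε)|0⟩ + √ε|1⟩, one has (1/2)‖ρ−σ_ε‖₁ ≤ √ε and ρ ≤ 10 σ_ε, yet D̂(ρ‖σ_ε) = log 10 for all ε ∈ (0,1). -/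

import Mathlib

open Matrix
open scoped Kronecker ComplexOrder
attribute [local instance] Classical.propDecidable

noncomputable section

variable {d dA dB : Type*} [Fintype d] [DecidableEq d]
  [Fintype dA] [DecidableEq dA] [Fintype dB] [DecidableEq dB]

def cfcM (f : ℝ → ℝ) (A : Matrix d d ℂ) : Matrix d d ℂ :=
  if h : A.IsHermitian then h.cfc f else 0

def mpow (A : Matrix d d ℂ) (α : ℝ) : Matrix d d ℂ := cfcM (fun x => x ^ α) A

def trR (A : Matrix d d ℂ) : ℝ := (A.trace).re

def MLE (A B : Matrix d d ℂ) : Prop := (B - A).PosSemidef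

def suppLE (P Q : Matrix d d ℂ) : Prop := ∀ v, Q.mulVec v = 0 → P.mulVec v = 0

def IsState (ρ : Matrix d d ℂ) : Prop := ρ.PosSemidef ∧ trR ρ = 1

def SubState (ρ : Matrix d d ℂ) : Prop := ρ.PosSemidef ∧ trR ρ ≤ 1

def relEnt (P Q : Matrix d d ℂ) : EReal :=
  if suppLE P Q then
    ((trR (P * (cfcM (Real.logb 2) P - cfcM (Real.logb 2) Q)) / trR P : ℝ) : EReal)
  else ⊤

def sandD (α : ℝ) (P Q : Matrix d d ℂ) : EReal :=
  if α = 1 then relEnt P Q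
  else if (α < 1 ∧ P * Q ≠ 0) ∨ suppLE P Q then
    (((α - 1)⁻¹ * Real.logb 2
      (trR (mpow (mpow Q (-(α-1)/(2*α)) * P * mpow Q (-(α-1)/(2*α))) α) / trR P) : ℝ) : EReal)
  else ⊤

def Dmax (P Q : Matrix d d ℂ) : EReal :=
  sInf {x : EReal | ∃ l : ℝ, x = (l : EReal) ∧ MLE P ((2:ℝ) ^ l • Q)}

def traceNorm (X : Matrix d d ℂ) : ℝ := trR (cfcM Real.sqrt (Xᴴ * X))

def genFid (ρ σ : Matrix d d ℂ) : ℝ :=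
  (traceNorm (mpow ρ (1/2) * mpow σ (1/2)) + Real.sqrt ((1 - trR ρ) * (1 - trR σ)))^2

def purDist (ρ σ : Matrix d d ℂ) : ℝ := Real.sqrt (1 - genFid ρ σ)

def pBall (ε : ℝ) (ρ : Matrix d d ℂ) : Set (Matrix d d ℂ) :=
  {τ | τ.PosSemidef ∧ trR τ ≤ 1 ∧ purDist ρ τ ≤ ε}

def sDmax (ε : ℝ) (ρ η : Matrix d d ℂ) : EReal :=
  sInf {x : EReal | ∃ τ ∈ pBall ε ρ, x = Dmax τ η}

/-- Sandwiched α-Rényi conditional entropy `H̃↑_α(A|B)` (supremum over σ_B). -/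
def condSandUp (α : ℝ) (ρ : Matrix (dA × dB) (dA × dB) ℂ) : EReal :=
  sSup {x : EReal | ∃ σ : Matrix dB dB ℂ, IsState σ ∧
    x = - sandD α ρ ((1 : Matrix dA dA ℂ) ⊗ₖ σ)}

/-- Partial trace over the A system. -/
def ptrA (ρ : Matrix (dA × dB) (dA × dB) ℂ) : Matrix dB dB ℂ :=
  Matrix.of fun b b' => ∑ a : dA, ρ (a, b) (a, b')

/-- Partial trace over the B system. -/
def ptrB (ρ : Matrix (dA × dB) (dA × dB) ℂ) : Matrix dA dA ℂ :=
  Matrix.of fun a a' => ∑ b : dB, ρ (a, b) (a', b)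

/-- Sandwiched α-Rényi conditional entropy `H̃↓_α(A|B)`. -/
def condSandDown (α : ℝ) (ρ : Matrix (dA × dB) (dA × dB) ℂ) : EReal :=
  - sandD α ρ ((1 : Matrix dA dA ℂ) ⊗ₖ ptrA ρ)

/-- ε-smooth sandwiched α-Rényi conditional entropy. -/
def condSandUpSm (α ε : ℝ) (ρ : Matrix (dA × dB) (dA × dB) ℂ) : EReal :=
  sSup {x : EReal | ∃ τ ∈ pBall ε ρ, x = condSandUp α τ}

/-- Min-entropy `H_min(A|B)`. -/
def Hmin (ρ : Matrix (dA × dB) (dA × dB) ℂ) : EReal :=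
  sSup {x : EReal | ∃ l : ℝ, x = (l : EReal) ∧ ∃ σ : Matrix dB dB ℂ, IsState σ ∧
    MLE ρ ((2:ℝ) ^ (-l) • ((1 : Matrix dA dA ℂ) ⊗ₖ σ))}

/-- Smooth min-entropy `H^ε_min(A|B)`. -/
def HminSm (ε : ℝ) (ρ : Matrix (dA × dB) (dA × dB) ℂ) : EReal :=
  sSup {x : EReal | ∃ τ ∈ pBall ε ρ, x = Hmin τ}

/-- von Neumann entropy (base 2). -/
def vN (ρ : Matrix d d ℂ) : ℝ := - trR (cfcM (fun x => x * Real.logb 2 x) ρ)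

/-- von Neumann conditional entropy `H(A|B)`. -/
def vNCond (ρ : Matrix (dA × dB) (dA × dB) ℂ) : ℝ := vN ρ - vN (ptrA ρ)

def g0 (x : ℝ) : ℝ := - Real.logb 2 (1 - Real.sqrt (1 - x^2))

def g1 (x y : ℝ) : ℝ := g0 x - Real.logb 2 (1 - y^2)


/-- Geometric (Belavkin-Staszewski) relative entropy (base 2), for invertible σ. -/
def geomRel (ρ σ : Matrix d d ℂ) : ℝ :=
  trR (ρ * cfcM (Real.logb 2) (mpow ρ (1/2) * σ⁻¹ * mpow ρ (1/2)))

/-!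
For the pure state `ρ = |0⟩⟨0|` one has `D̂(ρ‖σ) = log₂ ⟨0|σ⁻¹|0⟩`, and
`⟨0|σ_ε⁻¹|0⟩ = (σ_ε)₁₁ / det σ_ε = (9ε/10) / (9ε/100) = 10` for every `ε`. Meanwhile `ρ - σ_ε` is
Hermitian with `(ρ - σ_ε)² = (81/100) ε • 1`, so its trace distance is `(9/10) √ε`, and
`10 σ_ε - ρ = 9 |ψ_ε⟩⟨ψ_ε| ≥ 0`. A bound `f(ε, d) → 0` would therefore have to exceed `log₂ 10`
at `d = log₂ 10` for arbitrarily small `ε`.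
-/

lemma isHermitian_diagonal_ofReal {n : Type*} [DecidableEq n] (v : n → ℝ) :
    (diagonal (Complex.ofReal ∘ v) : Matrix n n ℂ).IsHermitian :=
  isHermitian_diagonal_of_self_adjoint _ (by ext i; simp)

section DiagonalCFC

variable (v : d → ℝ)

lemma mem_spectrum_diagonal_ofReal (i : d) :
    v i ∈ spectrum ℝ (diagonal (Complex.ofReal ∘ v) : Matrix d d ℂ) := by
  rw [← spectrum.algebraMap_mem_iff ℂ, spectrum_diagonal]
  exact ⟨i, rfl⟩

def diagonalCfcHom :
    C(spectrum ℝ (diagonal (Complex.ofReal ∘ v) : Matrix d d ℂ), ℝ) →⋆ₐ[ℝ] Matrix d d ℂ where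
  toFun g := diagonal (Complex.ofReal ∘ g ∘ fun i => ⟨v i, mem_spectrum_diagonal_ofReal v i⟩)
  map_one' := diagonal_one
  map_mul' f g := by simp [← diagonal_mul_diagonal, Function.comp_def]
  map_zero' := diagonal_zero
  map_add' f g := by simp [← diagonal_add, Function.comp_def]
  commutes' r := by rw [algebraMap_eq_diagonal]; rfl
  map_star' f := by
    simp [star_eq_conjTranspose, diagonal_conjTranspose, Pi.star_def, Function.comp_def]

lemma cfcM_diagonal (f : ℝ → ℝ) :
    cfcM f (diagonal (Complex.ofReal ∘ v) : Matrix d d ℂ) = diagonal (Complex.ofReal ∘ f ∘ v) := by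
  have hv := isHermitian_diagonal_ofReal v
  have : FiniteDimensional ℝ C(spectrum ℝ (diagonal (Complex.ofReal ∘ v) : Matrix d d ℂ), ℝ) :=
    .of_injective (ContinuousMap.coeFnLinearMap ℝ (M := ℝ)) DFunLike.coe_injective
  -- `diagonalCfcHom v` is continuous and sends the identity to the matrix, so it is `cfcHom`.
  have hcfc := cfcHom_eq_of_continuous_of_map_id hv.isSelfAdjoint (diagonalCfcHom v)
    (LinearMap.continuous_of_finiteDimensional (diagonalCfcHom v).toLinearMap) (by rfl)
  rw [cfcM, dif_pos hv, ← hv.cfc_eq, cfc_apply f _ hv.isSelfAdjoint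
    (by rw [continuousOn_iff_continuous_domRestrict]; fun_prop), hcfc]
  rfl

end DiagonalCFC

lemma trR_diagonal (v : d → ℝ) : trR (diagonal (Complex.ofReal ∘ v) : Matrix d d ℂ) = ∑ i, v i := by
  simp [trR, trace_diagonal, Complex.re_sum]

lemma traceNorm_of_conjTranspose_mul_self_eq_diagonal {X : Matrix d d ℂ} (v : d → ℝ)
    (hX : Xᴴ * X = diagonal (Complex.ofReal ∘ v)) : traceNorm X = ∑ i, √(v i) := by
  rw [traceNorm, hX, cfcM_diagonal, trR_diagonal]
  rfl

section BasisState

variable (i : d)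

lemma mpow_diagonal_single (α : ℝ) (hα : α ≠ 0) :
    mpow (diagonal (Pi.single i 1)) α = diagonal (Pi.single i 1) := by
  have h : (Pi.single i 1 : d → ℂ) = Complex.ofReal ∘ Pi.single i 1 := by
    ext j; by_cases hj : j = i <;> simp [hj]
  rw [mpow, h, cfcM_diagonal]
  congr 2; ext j; by_cases hj : j = i <;> simp [hj, Real.zero_rpow hα]

lemma diagonal_single_mul_mul_diagonal_single (A : Matrix d d ℂ) :
    diagonal (Pi.single i 1) * A * diagonal (Pi.single i 1) = diagonal (Pi.single i (A i i)) := by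
  ext j k
  simp only [diagonal_mul, mul_diagonal, diagonal_apply, Pi.single_apply]
  split_ifs <;> simp_all

lemma geomRel_diagonal_single {σ : Matrix d d ℂ} (hσ : σ.IsHermitian) :
    geomRel (diagonal (Pi.single i 1)) σ = Real.logb 2 (σ⁻¹ i i).re := by
  set r := (σ⁻¹ i i).re
  have hr : diagonal (Pi.single i (σ⁻¹ i i)) = diagonal (Complex.ofReal ∘ Pi.single i r) := by
    rw [← hσ.inv.coe_re_apply_self]
    congr 1; ext j; by_cases hj : j = i <;> simp [hj, r]
  have hlog : Complex.ofReal ∘ Real.logb 2 ∘ Pi.single i r = Pi.single i (Real.logb 2 r : ℂ) := by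
    ext j; by_cases hj : j = i <;> simp [hj]
  rw [geomRel, mpow_diagonal_single i _ (by norm_num), diagonal_single_mul_mul_diagonal_single, hr,
    cfcM_diagonal, hlog, diagonal_mul_diagonal]
  simp [trR, trace_diagonal, Pi.single_apply]

end BasisState

def psiEps (ε : ℝ) : Fin 2 → ℂ := ![(√(1 - ε) : ℂ), (√ε : ℂ)]

def rho0 : Matrix (Fin 2) (Fin 2) ℂ := vecMulVec ![1, 0] (star ![1, 0])

def sigmaEps (ε : ℝ) : Matrix (Fin 2) (Fin 2) ℂ :=
  (9/10 : ℝ) • vecMulVec (psiEps ε) (star (psiEps ε)) + (1/10 : ℝ) • rho0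

lemma rho0_eq_diagonal : rho0 = diagonal (Pi.single 0 1) := by
  ext i j; fin_cases i <;> fin_cases j <;> simp [rho0, vecMulVec_apply, -cons_vecMulVec]

lemma isState_rho0 : IsState rho0 := by
  refine ⟨posSemidef_vecMulVec_self_star _, ?_⟩
  simp [rho0_eq_diagonal, trR, trace_diagonal]

section Qubit

variable {ε : ℝ}

lemma sigmaEps_eq (h0 : 0 ≤ ε) (h1 : ε ≤ 1) :
    sigmaEps ε = !![((1 - 9/10 * ε : ℝ) : ℂ), ((9/10 * (√(1 - ε) * √ε) : ℝ) : ℂ);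
      ((9/10 * (√(1 - ε) * √ε) : ℝ) : ℂ), ((9/10 * ε : ℝ) : ℂ)] := by
  have hT : (√(1 - ε) : ℂ) * √(1 - ε) = 1 - ε := by
    exact_mod_cast Real.mul_self_sqrt (by linarith : 0 ≤ 1 - ε)
  have hS : (√ε : ℂ) * √ε = ε := by exact_mod_cast Real.mul_self_sqrt h0
  ext i j
  fin_cases i <;> fin_cases j <;>
    simp [sigmaEps, psiEps, rho0, vecMulVec_apply, -cons_vecMulVec, hT, hS] <;> ring

lemma sq_sqrt_one_sub_mul_sqrt (h0 : 0 ≤ ε) (h1 : ε ≤ 1) : (√(1 - ε) * √ε) ^ 2 = (1 - ε) * ε := by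
  rw [mul_pow, Real.sq_sqrt (by linarith), Real.sq_sqrt h0]

lemma det_sigmaEps (h0 : 0 ≤ ε) (h1 : ε ≤ 1) : (sigmaEps ε).det = ((9/100 * ε : ℝ) : ℂ) := by
  rw [sigmaEps_eq h0 h1, det_fin_two_of]
  norm_cast
  linear_combination -(81/100 : ℝ) * sq_sqrt_one_sub_mul_sqrt h0 h1

lemma inv_sigmaEps_zero_zero (h0 : 0 < ε) (h1 : ε ≤ 1) : (sigmaEps ε)⁻¹ 0 0 = 10 := by
  have hε : (ε : ℂ) ≠ 0 := by exact_mod_cast h0.ne'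
  rw [inv_def, det_sigmaEps h0.le h1, Ring.inverse_eq_inv', sigmaEps_eq h0.le h1,
    adjugate_fin_two_of, Matrix.smul_apply]
  simp only [of_apply, cons_val', cons_val_zero, cons_val_fin_one, smul_eq_mul]
  push_cast
  field_simp
  ring

lemma trR_sigmaEps (h0 : 0 ≤ ε) (h1 : ε ≤ 1) : trR (sigmaEps ε) = 1 := by
  rw [sigmaEps_eq h0 h1, trR, trace_fin_two_of]
  norm_cast
  ring

lemma posSemidef_sigmaEps : (sigmaEps ε).PosSemidef :=
  ((posSemidef_vecMulVec_self_star _).smul (by norm_num)).add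
    ((posSemidef_vecMulVec_self_star _).smul (by norm_num))

lemma posDef_sigmaEps (h0 : 0 < ε) (h1 : ε ≤ 1) : (sigmaEps ε).PosDef := by
  rw [posSemidef_sigmaEps.posDef_iff_det_ne_zero, det_sigmaEps h0.le h1]
  exact_mod_cast (by positivity : 9/100 * ε ≠ 0)

lemma isState_sigmaEps (h0 : 0 ≤ ε) (h1 : ε ≤ 1) : IsState (sigmaEps ε) :=
  ⟨posSemidef_sigmaEps, trR_sigmaEps h0 h1⟩

lemma mle_rho0_ten_smul_sigmaEps : MLE rho0 ((10 : ℝ) • sigmaEps ε) := by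
  have h : (10 : ℝ) • sigmaEps ε - rho0 = (9 : ℝ) • vecMulVec (psiEps ε) (star (psiEps ε)) := by
    simp only [sigmaEps, smul_add, smul_smul]
    norm_num
  rw [MLE, h]
  exact (posSemidef_vecMulVec_self_star _).smul (by norm_num)

lemma conjTranspose_mul_self_rho0_sub_sigmaEps (h0 : 0 ≤ ε) (h1 : ε ≤ 1) :
    (rho0 - sigmaEps ε)ᴴ * (rho0 - sigmaEps ε) =
      diagonal (Complex.ofReal ∘ fun _ => 81/100 * ε) := by
  have hb : ((√(1 - ε) : ℂ) * √ε) ^ 2 = (1 - ε) * ε := by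
    exact_mod_cast sq_sqrt_one_sub_mul_sqrt h0 h1
  have hX : (rho0 - sigmaEps ε).IsHermitian :=
    (posSemidef_vecMulVec_self_star _).isHermitian.sub posSemidef_sigmaEps.isHermitian
  rw [hX.eq, rho0_eq_diagonal, sigmaEps_eq h0 h1]
  ext i j
  fin_cases i <;> fin_cases j <;> simp [mul_apply, Fin.sum_univ_two] <;>
    first | ring1 | linear_combination (81/100 : ℂ) * hb

lemma traceDist_rho0_sigmaEps_le (h0 : 0 ≤ ε) (h1 : ε ≤ 1) :
    1/2 * traceNorm (rho0 - sigmaEps ε) ≤ √ε := by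
  rw [traceNorm_of_conjTranspose_mul_self_eq_diagonal _
    (conjTranspose_mul_self_rho0_sub_sigmaEps h0 h1), Fin.sum_univ_two, Real.sqrt_mul (by norm_num),
    show (81/100 : ℝ) = (9/10) ^ 2 by norm_num, Real.sqrt_sq (by norm_num)]
  linarith [Real.sqrt_nonneg ε]

lemma geomRel_rho0_sigmaEps (h0 : 0 < ε) (h1 : ε ≤ 1) :
    geomRel rho0 (sigmaEps ε) = Real.logb 2 10 := by
  rw [rho0_eq_diagonal, geomRel_diagonal_single _ (posDef_sigmaEps h0 h1).isHermitian,
    inv_sigmaEps_zero_zero h0 h1]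
  norm_num

end Qubit

/-- Appendix B: no continuity bound of the form `D-hat(ρ‖σ) ≤ f(ε,d)` with
`f(ε,d) → 0` as `ε → 0` can hold; witnessed by the explicit qubit example. -/
theorem no_geomRel_continuity_bound :
    (∀ ε : ℝ, ε ∈ Set.Ioo (0:ℝ) 1 →
      (1/2 * traceNorm
          (Matrix.vecMulVec (![1, 0] : Fin 2 → ℂ) (star (![1, 0] : Fin 2 → ℂ)) -
            ((9/10 : ℝ) • Matrix.vecMulVec
                (![(Real.sqrt (1 - ε) : ℂ), (Real.sqrt ε : ℂ)])
                (star ![(Real.sqrt (1 - ε) : ℂ), (Real.sqrt ε : ℂ)]) +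
              (1/10 : ℝ) • Matrix.vecMulVec (![1, 0] : Fin 2 → ℂ)
                (star (![1, 0] : Fin 2 → ℂ)))) ≤ Real.sqrt ε) ∧
      MLE (Matrix.vecMulVec (![1, 0] : Fin 2 → ℂ) (star (![1, 0] : Fin 2 → ℂ)))
        ((10 : ℝ) •
          ((9/10 : ℝ) • Matrix.vecMulVec
              (![(Real.sqrt (1 - ε) : ℂ), (Real.sqrt ε : ℂ)])
              (star ![(Real.sqrt (1 - ε) : ℂ), (Real.sqrt ε : ℂ)]) +
            (1/10 : ℝ) • Matrix.vecMulVec (![1, 0] : Fin 2 → ℂ)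
              (star (![1, 0] : Fin 2 → ℂ)))) ∧
      geomRel (Matrix.vecMulVec (![1, 0] : Fin 2 → ℂ) (star (![1, 0] : Fin 2 → ℂ)))
          ((9/10 : ℝ) • Matrix.vecMulVec
              (![(Real.sqrt (1 - ε) : ℂ), (Real.sqrt ε : ℂ)])
              (star ![(Real.sqrt (1 - ε) : ℂ), (Real.sqrt ε : ℂ)]) +
            (1/10 : ℝ) • Matrix.vecMulVec (![1, 0] : Fin 2 → ℂ)
              (star (![1, 0] : Fin 2 → ℂ))) = Real.logb 2 10) ∧
    ¬ ∃ f : ℝ → ℝ → ℝ,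
      (∀ dd : ℝ, Filter.Tendsto (fun ε => f ε dd)
        (nhdsWithin 0 (Set.Ioi 0)) (nhds 0)) ∧
      (∀ (ε dd : ℝ) (ρ σ : Matrix (Fin 2) (Fin 2) ℂ), IsState ρ → IsState σ →
        σ.PosDef → 1 ≤ dd → 1/2 * traceNorm (ρ - σ) ≤ ε →
        MLE ρ ((2:ℝ) ^ dd • σ) → geomRel ρ σ ≤ f ε dd) := by
  refine ⟨fun ε ⟨h0, h1⟩ => ⟨traceDist_rho0_sigmaEps_le h0.le h1.le, mle_rho0_ten_smul_sigmaEps,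
    geomRel_rho0_sigmaEps h0 h1.le⟩, ?_⟩
  rintro ⟨f, hf_lim, hf_bound⟩
  have h_one_le : 1 ≤ Real.logb 2 10 :=
    (Real.le_logb_iff_rpow_le one_lt_two (by norm_num)).2 (by norm_num)
  have h_rpow : (2 : ℝ) ^ Real.logb 2 10 = 10 := Real.rpow_logb two_pos (by norm_num) (by norm_num)
  -- `σ_{δ²}` is `δ`-close to `ρ`, yet `D̂(ρ‖σ_{δ²}) = log₂ 10 > f δ (log₂ 10)`.
  obtain ⟨δ, hfδ, hδ0, hδ1⟩ := (((hf_lim (Real.logb 2 10)).eventually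
    (gt_mem_nhds (by linarith : (0 : ℝ) < Real.logb 2 10))).and (Ioo_mem_nhdsGT one_pos)).exists
  have hδ2 : 0 < δ ^ 2 := by positivity
  have hδ2' : δ ^ 2 ≤ 1 := by nlinarith
  have h_dist : 1/2 * traceNorm (rho0 - sigmaEps (δ ^ 2)) ≤ δ :=
    (traceDist_rho0_sigmaEps_le hδ2.le hδ2').trans (Real.sqrt_sq hδ0.le).le
  have := hf_bound δ _ rho0 (sigmaEps (δ ^ 2)) isState_rho0 (isState_sigmaEps hδ2.le hδ2')
    (posDef_sigmaEps hδ2 hδ2') h_one_le h_dist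
    (by rw [h_rpow]; exact mle_rho0_ten_smul_sigmaEps)
  rw [geomRel_rho0_sigmaEps hδ2 hδ2'] at this
  linarith

end
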